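/- For all real x ∈ [-1/2, 1/2]: |E₆(x + 0.65i)| < 14.26 and |E₆(x + 0.75i)| < 5.25, where E₆ is the normalized weight-6 Eisenstein series. -/

import Mathlib

open Complex Real

/-- The divisor-power sum `σ_k(n) = ∑_{d ∣ n} d^k`. -/
def sigma' (k n : ℕ) : ℕ := ∑ d ∈ n.divisors, d ^ k

/-- The weight-6 Eisenstein series `E₆(τ) = 1 - 504 ∑ σ₅(n) qⁿ`, `q = e^{2πiτ}`. -/
noncomputable def E6 (τ : ℂ) : ℂ :=
  1 - 504 * ∑' n : ℕ, (sigma' 5 (n + 1) : ℂ) * Complex.exp (2 * π * I * τ) ^ (n + 1)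

/-!
Write `q = e^{2πiτ}`, `r = |q|`, so that
`E₆ = 1 - 504q - 16632q² - 122976q³ - 504 ∑_{n≥4} σ₅(n) qⁿ`.
For real `α`, `γ > 0`, `|1 + αq - γq²|² = (1 + γr²)² + α²r² + 2α(1 - γr²) Re q - 4γ (Re q)²`
is a concave quadratic in `Re q`, so completing the square bounds the quadratic part with the
cancellation between its terms, which the triangle inequality would lose. The cubic term is
bounded trivially, and the tail by `σ₅(n) ≤ n⁶` and Bernoulli's inequality, which turn it into
a geometric series. On the two lines `r = e^{-2π Im τ}` is bounded above by inverting a Taylor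
polynomial of `exp` at `2 · 3.141592 · Im τ`.
-/

open scoped Nat

theorem sigma'_le_pow_succ (k n : ℕ) : sigma' k n ≤ n ^ (k + 1) :=
  calc sigma' k n ≤ ∑ _d ∈ n.divisors, n ^ k :=
        Finset.sum_le_sum fun d hd => Nat.pow_le_pow_left (Nat.divisor_le hd) k
    _ = n.divisors.card * n ^ k := by rw [Finset.sum_const, smul_eq_mul]
    _ ≤ n * n ^ k := Nat.mul_le_mul_right _ (Nat.card_divisors_le_self n)
    _ = n ^ (k + 1) := by ring

theorem norm_sigma'_mul_pow_le (k n : ℕ) {q : ℂ} {R : ℝ} (hq : ‖q‖ ≤ R) :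
    ‖(sigma' k n : ℂ) * q ^ n‖ ≤ (n : ℝ) ^ (k + 1) * R ^ n := by
  rw [norm_mul, norm_pow, Complex.norm_natCast]
  gcongr
  exact_mod_cast sigma'_le_pow_succ k n

theorem summable_sigma'_mul_pow (k : ℕ) {q : ℂ} (hq : ‖q‖ < 1) :
    Summable fun n => (sigma' k n : ℂ) * q ^ n :=
  .of_norm_bounded (summable_pow_mul_geometric_of_norm_lt_one (k + 1) (by simpa using hq))
    fun n => norm_sigma'_mul_pow_le k n le_rfl

-- Bernoulli's inequality `1 + m/N ≤ (1 + 1/N)^m`.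
theorem natCast_add_pow_mul_pow_le_geometric {N : ℕ} (hN : 0 < N) (k m : ℕ) {R : ℝ}
    (hR : 0 ≤ R) :
    ((m + N : ℕ) : ℝ) ^ k * R ^ (m + N) ≤ (N : ℝ) ^ k * R ^ N * ((1 + 1 / N) ^ k * R) ^ m := by
  have hN' : (0 : ℝ) < N := by exact_mod_cast hN
  have hbase : ((m + N : ℕ) : ℝ) ≤ N * (1 + 1 / N) ^ m := by
    have := one_add_mul_le_pow (a := 1 / (N : ℝ)) (by linarith [one_div_pos.mpr hN']) m
    calc ((m + N : ℕ) : ℝ) = N * (1 + m * (1 / N)) := by push_cast; field_simp; ring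
      _ ≤ N * (1 + 1 / N) ^ m := by gcongr
  calc ((m + N : ℕ) : ℝ) ^ k * R ^ (m + N) ≤ (N * (1 + 1 / N) ^ m) ^ k * R ^ (m + N) := by
        gcongr
    _ = (N : ℝ) ^ k * R ^ N * ((1 + 1 / N) ^ k * R) ^ m := by ring

theorem norm_tsum_sigma'_tail_le (k : ℕ) {N : ℕ} (hN : 0 < N) {q : ℂ} {R : ℝ} (hq : ‖q‖ ≤ R)
    (hR : (1 + 1 / N) ^ (k + 1) * R < 1) :
    ‖∑' m, (sigma' k (m + N) : ℂ) * q ^ (m + N)‖ ≤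
      (N : ℝ) ^ (k + 1) * R ^ N / (1 - (1 + 1 / N) ^ (k + 1) * R) := by
  have hR0 : 0 ≤ R := (norm_nonneg q).trans hq
  refine tsum_of_norm_bounded
    ((hasSum_geometric_of_lt_one (by positivity) hR).mul_left ((N : ℝ) ^ (k + 1) * R ^ N))
    fun m => ?_
  exact (norm_sigma'_mul_pow_le k (m + N) hq).trans
    (natCast_add_pow_mul_pow_le_geometric hN (k + 1) m hR0)

theorem E6_eq_sub_tail (τ q : ℂ) (hτ : cexp (2 * π * I * τ) = q) (hq : ‖q‖ < 1) :
    E6 τ = 1 - 504 * q - 16632 * q ^ 2 - 122976 * q ^ 3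
      - 504 * ∑' m, (sigma' 5 (m + 4) : ℂ) * q ^ (m + 4) := by
  have hs : Summable fun n => (sigma' 5 (n + 1) : ℂ) * q ^ (n + 1) :=
    (summable_nat_add_iff 1).mpr (summable_sigma'_mul_pow 5 hq)
  have h1 : sigma' 5 1 = 1 := by decide
  have h2 : sigma' 5 2 = 33 := by decide
  have h3 : sigma' 5 3 = 244 := by decide
  rw [E6, hτ, ← hs.sum_add_tsum_nat_add 3]
  simp only [Finset.sum_range_succ, Finset.sum_range_zero, add_assoc, h1, h2, h3]
  push_cast
  ring

theorem norm_sq_one_add_mul_add_mul_sq (α β : ℝ) (q : ℂ) :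
    ‖1 + α * q + β * q ^ 2‖ ^ 2 = (1 - β * ‖q‖ ^ 2) ^ 2 + α ^ 2 * ‖q‖ ^ 2
      + 2 * α * (1 + β * ‖q‖ ^ 2) * q.re + 4 * β * q.re ^ 2 := by
  rw [Complex.sq_norm, Complex.sq_norm, Complex.normSq_apply, Complex.normSq_apply]
  simp only [add_re, add_im, mul_re, mul_im, ofReal_re, ofReal_im, one_re, one_im, pow_two]
  ring

theorem norm_sq_one_add_mul_sub_mul_sq_le (α : ℝ) {γ R : ℝ} (hγ : 0 < γ) {q : ℂ}
    (hq : ‖q‖ ≤ R) :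
    ‖1 + α * q - γ * q ^ 2‖ ^ 2 ≤
      (1 + γ * R ^ 2) ^ 2 + α ^ 2 * R ^ 2 + α ^ 2 * (1 - γ * R ^ 2) ^ 2 / (4 * γ) := by
  set u := ‖q‖ ^ 2
  have hu : u ≤ R ^ 2 := pow_le_pow_left₀ (norm_nonneg q) hq 2
  have hu0 : 0 ≤ u := by positivity
  have hid : ‖1 + α * q - γ * q ^ 2‖ ^ 2 =
      (1 + γ * u) ^ 2 + α ^ 2 * u + 2 * α * (1 - γ * u) * q.re - 4 * γ * q.re ^ 2 := by
    rw [sub_eq_add_neg, ← neg_mul, ← ofReal_neg, norm_sq_one_add_mul_add_mul_sq]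
    ring
  have hsquare :
      2 * α * (1 - γ * u) * q.re - 4 * γ * q.re ^ 2 ≤ α ^ 2 * (1 - γ * u) ^ 2 / (4 * γ) := by
    rw [le_div_iff₀ (by positivity)]
    nlinarith [sq_nonneg (α * (1 - γ * u) - 4 * γ * q.re)]
  have hmono : (1 + γ * u) ^ 2 + α ^ 2 * u + α ^ 2 * (1 - γ * u) ^ 2 / (4 * γ) ≤
      (1 + γ * R ^ 2) ^ 2 + α ^ 2 * R ^ 2 + α ^ 2 * (1 - γ * R ^ 2) ^ 2 / (4 * γ) := by
    have hdiff : ((1 + γ * R ^ 2) ^ 2 + α ^ 2 * R ^ 2 + α ^ 2 * (1 - γ * R ^ 2) ^ 2 / (4 * γ)) -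
        ((1 + γ * u) ^ 2 + α ^ 2 * u + α ^ 2 * (1 - γ * u) ^ 2 / (4 * γ)) =
        (R ^ 2 - u) * (2 * γ + γ ^ 2 * (R ^ 2 + u) + α ^ 2 / 2 + α ^ 2 * γ * (R ^ 2 + u) / 4) := by
      field_simp
      ring
    have hnonneg : 0 ≤ (R ^ 2 - u) *
        (2 * γ + γ ^ 2 * (R ^ 2 + u) + α ^ 2 / 2 + α ^ 2 * γ * (R ^ 2 + u) / 4) :=
      mul_nonneg (by linarith) (by positivity)
    linarith
  linarith

theorem norm_E6_lt_of_norm_cexp_le {τ : ℂ} {R M t : ℝ} (hR : ‖cexp (2 * π * I * τ)‖ ≤ R)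
    (hR1 : (5 / 4) ^ 6 * R < 1) (hM : 0 ≤ M)
    (hM2 : (1 + 16632 * R ^ 2) ^ 2 + 504 ^ 2 * R ^ 2
      + 504 ^ 2 * (1 - 16632 * R ^ 2) ^ 2 / (4 * 16632) ≤ M ^ 2)
    (ht : M + 122976 * R ^ 3 + 504 * (4 ^ 6 * R ^ 4 / (1 - (5 / 4) ^ 6 * R)) < t) :
    ‖E6 τ‖ < t := by
  set q := cexp (2 * π * I * τ)
  set T := ∑' m, (sigma' 5 (m + 4) : ℂ) * q ^ (m + 4)
  have hR0 : 0 ≤ R := (norm_nonneg q).trans hR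
  have hquadratic : ‖1 - 504 * q - 16632 * q ^ 2‖ ≤ M := by
    have h := norm_sq_one_add_mul_sub_mul_sq_le (-504) (by norm_num : (0 : ℝ) < 16632) hR
    have hcast : (1 : ℂ) - 504 * q - 16632 * q ^ 2 =
        1 + ((-504 : ℝ) : ℂ) * q - ((16632 : ℝ) : ℂ) * q ^ 2 := by
      push_cast
      ring
    rw [← sq_le_sq₀ (norm_nonneg _) hM, hcast]
    exact h.trans (by norm_num at hM2 ⊢; linarith)
  have htail : ‖T‖ ≤ 4 ^ 6 * R ^ 4 / (1 - (5 / 4) ^ 6 * R) := by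
    have h := norm_tsum_sigma'_tail_le 5 (N := 4) (by norm_num) hR (by norm_num; linarith)
    norm_num at h ⊢
    exact h
  rw [E6_eq_sub_tail τ q rfl (by nlinarith)]
  calc ‖1 - 504 * q - 16632 * q ^ 2 - 122976 * q ^ 3 - 504 * T‖
      ≤ ‖1 - 504 * q - 16632 * q ^ 2‖ + ‖(122976 : ℂ) * q ^ 3‖ + ‖(504 : ℂ) * T‖ :=
        (norm_sub_le _ _).trans (by gcongr; exact norm_sub_le _ _)
    _ = ‖1 - 504 * q - 16632 * q ^ 2‖ + 122976 * ‖q‖ ^ 3 + 504 * ‖T‖ := by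
        simp only [norm_mul, norm_pow, Complex.norm_ofNat]
    _ ≤ M + 122976 * R ^ 3 + 504 * (4 ^ 6 * R ^ 4 / (1 - (5 / 4) ^ 6 * R)) := by
        gcongr
    _ < t := ht

theorem norm_cexp_two_pi_I_mul (x y : ℝ) :
    ‖cexp (2 * π * I * (x + y * I))‖ = Real.exp (-(2 * π * y)) := by
  rw [Complex.norm_exp]
  congr 1
  simp

theorem exp_neg_le_inv_sum_range {x : ℝ} (hx : 0 ≤ x) (n : ℕ) :
    Real.exp (-x) ≤ (∑ i ∈ Finset.range (n + 1), x ^ i / i !)⁻¹ := by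
  rw [Real.exp_neg]
  refine inv_anti₀ ?_ (Real.sum_le_exp_of_nonneg hx _)
  rw [Finset.sum_range_succ']
  positivity

theorem exp_neg_two_pi_mul_le {y : ℝ} (hy : 0 ≤ y) (n : ℕ) :
    Real.exp (-(2 * π * y)) ≤ (∑ i ∈ Finset.range (n + 1), (2 * 3.141592 * y) ^ i / i !)⁻¹ :=
  (Real.exp_le_exp.mpr (by nlinarith [Real.pi_gt_d6])).trans
    (exp_neg_le_inv_sum_range (by positivity) n)

theorem E6_line_bounds_general (x : ℝ) :
    ‖E6 ((x : ℂ) + 0.65 * I)‖ < 14.26 ∧ ‖E6 ((x : ℂ) + 0.75 * I)‖ < 5.25 := by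
  have hnorm_q (y : ℝ) (n : ℕ) (hy : 0 ≤ y) :
      ‖cexp (2 * π * I * (x + y * I))‖ ≤
        (∑ i ∈ Finset.range (n + 1), (2 * 3.141592 * y) ^ i / i !)⁻¹ :=
    (norm_cexp_two_pi_I_mul x y).trans_le (exp_neg_two_pi_mul_le hy n)
  constructor
  · rw [show (0.65 : ℂ) = ((13 / 20 : ℝ) : ℂ) by norm_num]
    refine norm_E6_lt_of_norm_cexp_le (R := 0.0169) (M := 12.7)
      ((hnorm_q _ 13 (by norm_num)).trans ?_) (by norm_num) (by norm_num) (by norm_num)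
      (by norm_num)
    norm_num [Finset.sum_range_succ, Nat.factorial]
  · rw [show (0.75 : ℂ) = ((3 / 4 : ℝ) : ℂ) by norm_num]
    refine norm_E6_lt_of_norm_cexp_le (R := 0.008984) (M := 5.1418)
      ((hnorm_q _ 17 (by norm_num)).trans ?_) (by norm_num) (by norm_num) (by norm_num)
      (by norm_num)
    norm_num [Finset.sum_range_succ, Nat.factorial]

theorem E6_line_bounds (x : ℝ) (hx : x ∈ Set.Icc (-(1/2) : ℝ) (1/2)) :
    ‖E6 ((x : ℂ) + 0.65 * I)‖ < 14.26 ∧ ‖E6 ((x : ℂ) + 0.75 * I)‖ < 5.25 :=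
  E6_line_bounds_general x
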